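/- Let D be a division ring of characteristic p > 0 with derivation δ and let f(t) = t^p − t − d ∈ D[t;δ]. Then the map G_{id,−1} (fixing D pointwise and sending t to t−1) is an automorphism of the Petit algebra S_f of order exactly p. -/

import Mathlib

open Finsupp

section Defs

variable {D R : Type*}

/-- `δ` is a derivation on the (possibly noncommutative) ring `D`. -/
def IsDeriv [Ring D] (δ : D → D) : Prop :=
  (∀ a b, δ (a + b) = δ a + δ b) ∧ ∀ a b, δ (a * b) = a * δ b + δ a * b

/-- `(R, i, t, coeff)` realizes the differential polynomial ring `D[t;δ]`:
`t * a = a * t + δ a` for `a ∈ D`, and every element of `R` is uniquely of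
the form `∑ aₙ tⁿ`, the `aₙ` being recorded by the additive equivalence `coeff`. -/
def IsDiffPolyRing [Ring D] [Ring R] (δ : D → D) (i : D →+* R) (t : R)
    (coeff : R ≃+ (ℕ →₀ D)) : Prop :=
  (∀ a : D, t * i a = i a * t + i (δ a)) ∧
    ∀ (n : ℕ) (a : D), coeff.symm (Finsupp.single n a) = i a * t ^ n

/-- `r` has degree `< m`. -/
def DegLt [Ring D] [Ring R] (coeff : R ≃+ (ℕ →₀ D)) (m : ℕ) (r : R) : Prop :=
  ∀ n, m ≤ n → coeff r n = 0

/-- `f` is monic of degree `m`. -/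
def MonicDeg [Ring D] [Ring R] (coeff : R ≃+ (ℕ →₀ D)) (m : ℕ) (f : R) : Prop :=
  coeff f m = 1 ∧ ∀ n, m < n → coeff f n = 0

/-- The carrier of the Petit algebra `S_f`: all polynomials of degree `< m`. -/
def SfSet [Ring D] [Ring R] (coeff : R ≃+ (ℕ →₀ D)) (m : ℕ) : Set R :=
  {r | DegLt coeff m r}

/-- `mul` is the Petit multiplication: `mul x y = x·y mod_r f`, i.e. `mul x y`
has degree `< m` and differs from `x·y` by a left multiple of `f`. -/
def IsPetitMul [Ring D] [Ring R] (coeff : R ≃+ (ℕ →₀ D)) (f : R) (m : ℕ)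
    (mul : R → R → R) : Prop :=
  ∀ x y : R, DegLt coeff m (mul x y) ∧ ∃ q : R, x * y = q * f + mul x y

/-- `f` is right semi-invariant: `f·a ∈ D·f` for all `a ∈ D`. -/
def RightSemiInvariant [Ring D] [Ring R] (i : D →+* R) (f : R) : Prop :=
  ∀ a : D, ∃ b : D, f * i a = i b * f

/-- `f` is two-sided (invariant): the left ideal `Rf` is a two-sided ideal. -/
def TwoSidedElem [Ring R] (f : R) : Prop :=
  ∀ r : R, ∃ q : R, f * r = q * f

/-- `f` (of degree `m`) is irreducible: it has no factorization into factors
of degree `< m`. -/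
def IrredDeg [Ring D] [Ring R] (coeff : R ≃+ (ℕ →₀ D)) (m : ℕ) (f : R) : Prop :=
  ¬∃ g h : R, f = g * h ∧ DegLt coeff m g ∧ DegLt coeff m h

/-- `f` (of degree `m`) is irreducible as a polynomial with coefficients in
the subfield `Fset` of `D`. -/
def IrredOver [Ring D] [Ring R] (coeff : R ≃+ (ℕ →₀ D)) (Fset : Set D) (m : ℕ)
    (f : R) : Prop :=
  ¬∃ g h : R, f = g * h ∧ DegLt coeff m g ∧ DegLt coeff m h ∧
    (∀ n, coeff g n ∈ Fset) ∧ ∀ n, coeff h n ∈ Fset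

/-- Left nucleus of the algebra `(S, mul)`. -/
def LeftNuc [Ring R] (S : Set R) (mul : R → R → R) : Set R :=
  {x ∈ S | ∀ y ∈ S, ∀ z ∈ S, mul (mul x y) z = mul x (mul y z)}

/-- Middle nucleus of the algebra `(S, mul)`. -/
def MidNuc [Ring R] (S : Set R) (mul : R → R → R) : Set R :=
  {x ∈ S | ∀ y ∈ S, ∀ z ∈ S, mul (mul y x) z = mul y (mul x z)}

/-- Right nucleus of the algebra `(S, mul)`. -/
def RightNuc [Ring R] (S : Set R) (mul : R → R → R) : Set R :=
  {x ∈ S | ∀ y ∈ S, ∀ z ∈ S, mul (mul y z) x = mul y (mul z x)}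

/-- `(S, mul)` is a division algebra: all nonzero left and right
multiplications are bijective. -/
def IsDivAlg [Ring R] (S : Set R) (mul : R → R → R) : Prop :=
  ∀ x ∈ S, x ≠ 0 → Set.BijOn (mul x) S S ∧ Set.BijOn (fun y => mul y x) S S

/-- `(S, mul)` is associative. -/
def IsAssocOn [Ring R] (S : Set R) (mul : R → R → R) : Prop :=
  ∀ x ∈ S, ∀ y ∈ S, ∀ z ∈ S, mul (mul x y) z = mul x (mul y z)

/-- The constants of `δ`. -/
def ConstSet [Ring D] (δ : D → D) : Set D := {a | δ a = 0}

/-- The center of `D`. -/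
def CenterSet (D : Type*) [Ring D] : Set D := {a | ∀ b, a * b = b * a}

/-- `F₀ = Const(δ) ∩ C(D)`. -/
def F0Set [Ring D] (δ : D → D) : Set D := ConstSet δ ∩ CenterSet D

/-- The elements of the Petit algebra all of whose coefficients lie in `Fset`,
e.g. `Fset ⊕ Fset·t ⊕ ⋯ ⊕ Fset·t^{m-1}`. -/
def SubCoeffSet [Ring D] [Ring R] (coeff : R ≃+ (ℕ →₀ D)) (m : ℕ)
    (Fset : Set D) : Set R :=
  {r | DegLt coeff m r ∧ ∀ n, coeff r n ∈ Fset}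

/-- `S ⊆ R` has dimension `k` over the subfield `Fset ⊆ D` (acting through `i`):
there is an `Fset`-basis of size `k`. -/
def HasDim [Ring D] [Ring R] (Fset : Set D) (i : D →+* R) (S : Set R) (k : ℕ) : Prop :=
  ∃ b : Fin k → R, (∀ j, b j ∈ S) ∧
    ∀ x ∈ S, ∃! c : Fin k → D, (∀ j, c j ∈ Fset) ∧ x = ∑ j, i (c j) * b j

/-- `S ⊆ D` has dimension `k` over the subfield `Fset ⊆ D`. -/
def HasDimIn [Ring D] (Fset : Set D) (S : Set D) (k : ℕ) : Prop :=
  ∃ b : Fin k → D, (∀ j, b j ∈ S) ∧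
    ∀ x ∈ S, ∃! c : Fin k → D, (∀ j, c j ∈ Fset) ∧ x = ∑ j, c j * b j

/-- Substitution of `x` for `t` in `r = ∑ aₙ tⁿ`. -/
noncomputable def substT [Ring D] [Ring R] (coeff : R ≃+ (ℕ →₀ D)) (i : D →+* R) (r x : R) : R :=
  (coeff r).sum fun n c => i c * x ^ n

/-- `V_f(b)`: the constant `f(t) − f(t−b)`. -/
noncomputable def Vf [Ring D] [Ring R] (coeff : R ≃+ (ℕ →₀ D)) (i : D →+* R) (t f : R) (b : D) : D :=
  coeff (f - substT coeff i f (t - i b)) 0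

/-- `V_p(b)`: the constant with `(t−b)^p = t^p − V_p(b)`. -/
noncomputable def Vp [Ring D] [Ring R] (coeff : R ≃+ (ℕ →₀ D)) (i : D →+* R) (t : R) (p : ℕ)
    (b : D) : D :=
  coeff (t ^ p - (t - i b) ^ p) 0

/-- For commutative coefficients, `V_p(b) = b^p + δ^{p−1}(b)`. -/
def VpFun [Ring D] (δ : D → D) (p : ℕ) : D → D := fun b => b ^ p + δ^[p - 1] b

/-- `V(a) = V_{p^e}(a) + c₁ V_{p^{e−1}}(a) + ⋯ + c_e a`, computed with
`V_p(b) = b^p + δ^{p−1}(b)` (commutative case). -/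
def Vg [Ring D] (δ : D → D) (p e : ℕ) (c : Fin e → D) : D → D :=
  fun a => (VpFun δ p)^[e] a + ∑ j : Fin e, c j * (VpFun δ p)^[e - 1 - (j : ℕ)] a

/-- `V(a) = V_{p^e}(a) + c₁ V_{p^{e−1}}(a) + ⋯ + c_e a`, with `V_p` defined by
the identity `(t−b)^p = t^p − V_p(b)` in `D[t;δ]`. -/
noncomputable def VgR [Ring D] [Ring R] (coeff : R ≃+ (ℕ →₀ D)) (i : D →+* R) (t : R) (p e : ℕ)
    (c : Fin e → D) : D → D :=
  fun a => (Vp coeff i t p)^[e] a + ∑ j : Fin e, c j * (Vp coeff i t p)^[e - 1 - (j : ℕ)] a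

/-- The map `G_{id,−a}` sending `∑ bₙ tⁿ` to `∑ bₙ (t−a)ⁿ`. -/
noncomputable def Gmap [Ring D] [Ring R] (coeff : R ≃+ (ℕ →₀ D)) (i : D →+* R) (t : R) (a : D) :
    R → R :=
  fun r => substT coeff i r (t - i a)

/-- `H` is an isomorphism of `Fset`-algebras from `(S, mul)` onto `(S', mul')`. -/
def IsAlgIso [Ring D] [Ring R] (Fset : Set D) (i : D →+* R) (S S' : Set R)
    (mul mul' : R → R → R) (H : R → R) : Prop :=
  Set.BijOn H S S' ∧ (∀ x ∈ S, ∀ y ∈ S, H (x + y) = H x + H y) ∧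
    (∀ x ∈ S, ∀ y ∈ S, H (mul x y) = mul' (H x) (H y)) ∧ H 1 = 1 ∧
    ∀ a ∈ Fset, ∀ x ∈ S, H (i a * x) = i a * H x

/-- `H` is an `Fset`-algebra automorphism of the Petit algebra `(S, mul)`. -/
def IsAut [Ring D] [Ring R] (Fset : Set D) (i : D →+* R) (S : Set R)
    (mul : R → R → R) (H : R → R) : Prop :=
  IsAlgIso Fset i S S mul mul H

/-- The operator `δ^{p^e} + c₁ δ^{p^{e−1}} + ⋯ + c_e δ` vanishes on `Cset`,
i.e. the `p`-polynomial `t^{p^e} + c₁ t^{p^{e−1}} + ⋯ + c_e t` annihilates `δ|_{Cset}`. -/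
def PPolyAnnOn [Ring D] (δ : D → D) (Cset : Set D) (p e : ℕ) (c : Fin e → D) : Prop :=
  ∀ a ∈ Cset, δ^[p ^ e] a + ∑ j : Fin e, c j * δ^[p ^ (e - 1 - (j : ℕ))] a = 0

/-- `t^{p^e} + c₁ t^{p^{e−1}} + ⋯ + c_e t` (coefficients in `Fset`) is the minimum
`p`-polynomial of `δ` restricted to `Cset`. -/
def IsMinPPoly [Ring D] (δ : D → D) (Cset Fset : Set D) (p e : ℕ)
    (c : Fin e → D) : Prop :=
  (∀ j, c j ∈ Fset) ∧ PPolyAnnOn δ Cset p e c ∧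
    ∀ e' : ℕ, e' < e → ∀ c' : Fin e' → D, (∀ j, c' j ∈ Fset) →
      ¬PPolyAnnOn δ Cset p e' c'

/-- The natural map from `D[X]` to `R`, `∑ aₙ Xⁿ ↦ ∑ aₙ tⁿ`. -/
noncomputable def polyToR [Ring D] [Ring R] (i : D →+* R) (t : R) (q : Polynomial D) : R :=
  q.sum fun n a => i a * t ^ n

/-- The element `f ∈ R` rewritten as an ordinary polynomial in `D[X]`. -/
noncomputable def coeffPoly [Ring D] [Ring R] (coeff : R ≃+ (ℕ →₀ D)) (f : R) : Polynomial D :=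
  (coeff f).sum fun n a => Polynomial.C a * Polynomial.X ^ n

/-- The set `T = Fset ⊕ Fset·t ⊕ ⋯ ⊕ Fset·t^{m−1} ⊆ S_f` is isomorphic, as a
ring, to the quotient `Fset[X]/(f)`: the natural map `θ : ∑ aₙ Xⁿ ↦ ∑ aₙ tⁿ`,
from polynomials over `Fset` of degree `< m` with multiplication given by
reduction mod `f`, is a bijection onto `T` respecting all the operations. -/
def IsPolyQuotIso [Ring D] [Ring R] (Fset : Set D) (i : D →+* R)
    (coeff : R ≃+ (ℕ →₀ D)) (t f : R) (m : ℕ) (mul : R → R → R) (T : Set R) : Prop :=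
  Set.BijOn (polyToR i t)
    {q : Polynomial D | (∀ n, q.coeff n ∈ Fset) ∧ q.degree < (m : WithBot ℕ)} T ∧
  (∀ q q' : Polynomial D, polyToR i t (q + q') = polyToR i t q + polyToR i t q') ∧
  polyToR i t 1 = 1 ∧
  ∀ q ∈ {q : Polynomial D | (∀ n, q.coeff n ∈ Fset) ∧ q.degree < (m : WithBot ℕ)},
    ∀ q' ∈ {q : Polynomial D | (∀ n, q.coeff n ∈ Fset) ∧ q.degree < (m : WithBot ℕ)},
      ∃ s r : Polynomial D, q * q' = s * coeffPoly coeff f + r ∧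
        r.degree < (m : WithBot ℕ) ∧
        polyToR i t r = mul (polyToR i t q) (polyToR i t q')

end Defs

/-!
For central `a`, the element `t - a` obeys the same rule `(t - a) b = b (t - a) + δ b` as `t`,
so substituting it for `t` is a ring endomorphism `G_{id,-a}` of `D[t;δ]`. It preserves degrees,
and `G_{id,-a} ∘ G_{id,-b} = G_{id,-(a+b)}`, so it restricts to a bijection of `S_f` with inverse
`G_{id,a}`. In characteristic `p` we have `(t - 1)^p = t^p - 1`, hence `G_{id,-1}` fixes
`f = t^p - t - d`; since remainders on right division by the monic `f` are unique, it then
commutes with `mod_r f`. Finally `G_{id,-1}^k = G_{id,-k}` moves `t` unless `p ∣ k`.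
-/

section DiffPolyRing

variable {D R : Type*} [Ring D] [Ring R] {δ : D → D} {i : D →+* R} {t : R}
  {coeff : R ≃+ (ℕ →₀ D)}

namespace DegLt

variable {m : ℕ} {x y : R}

lemma mono {m' : ℕ} (h : m ≤ m') (hx : DegLt coeff m x) : DegLt coeff m' x :=
  fun n hn => hx n (h.trans hn)

lemma zero : DegLt coeff m (0 : R) := fun n _ => by simp

lemma add (hx : DegLt coeff m x) (hy : DegLt coeff m y) : DegLt coeff m (x + y) :=
  fun n hn => by rw [map_add, Finsupp.add_apply, hx n hn, hy n hn, add_zero]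

lemma sub (hx : DegLt coeff m x) (hy : DegLt coeff m y) : DegLt coeff m (x - y) :=
  fun n hn => by rw [map_sub, Finsupp.sub_apply, hx n hn, hy n hn, sub_zero]

lemma eq_zero_of_zero (hx : DegLt coeff 0 x) : x = 0 :=
  coeff.injective <| by ext n; simpa using hx n n.zero_le

end DegLt

section Substitution

lemma substT_zero (u : R) : substT coeff i 0 u = 0 := by
  simp [substT]

lemma substT_add (x y u : R) :
    substT coeff i (x + y) u = substT coeff i x u + substT coeff i y u := by
  unfold substT
  rw [map_add]
  exact Finsupp.sum_add_index' (by simp) (by simp [add_mul])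

lemma map_substT (Φ : R →+* R) (hΦ : ∀ a, Φ (i a) = i a) (x u : R) :
    Φ (substT coeff i x u) = substT coeff i x (Φ u) := by
  simp [substT, map_finsuppSum, hΦ]

end Substitution

namespace IsDiffPolyRing

variable (hR : IsDiffPolyRing δ i t coeff)
include hR

lemma coeff_monomial (n : ℕ) (a : D) : coeff (i a * t ^ n) = Finsupp.single n a := by
  rw [← hR.2 n a, coeff.apply_symm_apply]

lemma coeff_C (a : D) : coeff (i a) = Finsupp.single 0 a := by
  simpa using hR.coeff_monomial 0 a

lemma C_injective : Function.Injective i := fun a b hab =>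
  Finsupp.single_injective 0 <| by rw [← hR.coeff_C, ← hR.coeff_C, hab]

lemma induction_on {P : R → Prop} (h0 : P 0) (hmonomial : ∀ n a, P (i a * t ^ n))
    (hadd : ∀ x y, P x → P y → P (x + y)) (r : R) : P r := by
  rw [← coeff.symm_apply_apply r]
  induction coeff r using Finsupp.induction with
  | zero => simpa using h0
  | single_add n a g _ _ ih => rw [map_add, hR.2]; exact hadd _ _ (hmonomial n a) ih

lemma sum_monomial (x : R) : ∑ n ∈ (coeff x).support, i (coeff x n) * t ^ n = x := by
  conv_rhs => rw [← coeff.symm_apply_apply x, ← Finsupp.sum_single (coeff x)]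
  simp only [Finsupp.sum, map_sum, hR.2]

@[elab_as_elim]
lemma degLt_induction {m : ℕ} {P : R → Prop} (h0 : P 0)
    (hmonomial : ∀ n < m, ∀ a, P (i a * t ^ n)) (hadd : ∀ x y, P x → P y → P (x + y))
    {x : R} (hx : DegLt coeff m x) : P x := by
  rw [← hR.sum_monomial x]
  refine Finset.sum_induction _ P hadd h0 fun n hn => hmonomial n ?_ _
  by_contra h
  exact Finsupp.mem_support_iff.mp hn (hx n (not_lt.mp h))

lemma coeff_C_mul (a : D) (r : R) (n : ℕ) : coeff (i a * r) n = a * coeff r n := by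
  induction r using hR.induction_on generalizing n with
  | h0 => simp
  | hmonomial k b =>
    rw [← mul_assoc, ← map_mul, hR.coeff_monomial, hR.coeff_monomial, Finsupp.single_apply,
      Finsupp.single_apply]
    split_ifs <;> simp
  | hadd x y hx hy => rw [mul_add, map_add, Finsupp.add_apply, hx, hy, map_add,
      Finsupp.add_apply, mul_add]

lemma coeff_mul_pow (x : R) (k n : ℕ) : coeff (x * t ^ k) (n + k) = coeff x n := by
  induction x using hR.induction_on with
  | h0 => simp
  | hmonomial j a =>
    rw [mul_assoc, ← pow_add, hR.coeff_monomial, hR.coeff_monomial, Finsupp.single_apply,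
      Finsupp.single_apply]
    simp
  | hadd x y hx hy =>
    rw [add_mul, map_add coeff, Finsupp.add_apply, hx, hy, map_add coeff, Finsupp.add_apply]

variable {m : ℕ} {x : R}

lemma degLt_monomial {n : ℕ} (hn : n < m) (a : D) : DegLt coeff m (i a * t ^ n) := by
  intro k hk
  rw [hR.coeff_monomial, Finsupp.single_apply, if_neg (by omega)]

lemma degLt_t (hm : 1 < m) : DegLt coeff m t := by
  simpa using hR.degLt_monomial hm 1

lemma degLt_C (hm : 0 < m) (a : D) : DegLt coeff m (i a) := by
  simpa using hR.degLt_monomial hm a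

lemma degLt_C_mul (a : D) (hx : DegLt coeff m x) : DegLt coeff m (i a * x) :=
  fun n hn => by rw [hR.coeff_C_mul, hx n hn, mul_zero]

lemma degLt_mul_pow (k : ℕ) (hx : DegLt coeff m x) : DegLt coeff (m + k) (x * t ^ k) := by
  intro n hn
  obtain ⟨j, rfl⟩ : ∃ j, n = j + k := ⟨n - k, by omega⟩
  rw [hR.coeff_mul_pow, hx j (by omega)]

lemma degLt_t_mul (hx : DegLt coeff m x) : DegLt coeff (m + 1) (t * x) := by
  refine hR.degLt_induction (by simpa using DegLt.zero) (fun n hn a => ?_)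
    (fun x y hx hy => by rw [mul_add]; exact hx.add hy) hx
  rw [← mul_assoc, hR.1, add_mul, mul_assoc, ← pow_succ']
  exact (hR.degLt_monomial (by omega) a).add (hR.degLt_monomial (by omega) (δ a))

lemma degLt_pow_mul (k : ℕ) (hx : DegLt coeff m x) : DegLt coeff (m + k) (t ^ k * x) := by
  induction k with
  | zero => simpa using hx
  | succ k ih => rw [pow_succ', mul_assoc, ← add_assoc]; exact hR.degLt_t_mul ih

lemma degLt_mul_C (hx : DegLt coeff m x) (b : D) : DegLt coeff m (x * i b) := by
  refine hR.degLt_induction (by simpa using DegLt.zero) (fun n hn a => ?_)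
    (fun x y hx hy => by rw [add_mul]; exact hx.add hy) hx
  rw [mul_assoc]
  exact hR.degLt_C_mul a ((hR.degLt_pow_mul n (hR.degLt_C one_pos b)).mono (by omega))

lemma degLt_mul {k : ℕ} {y : R} (hx : DegLt coeff m x) (hy : DegLt coeff (k + 1) y) :
    DegLt coeff (m + k) (x * y) := by
  refine hR.degLt_induction (by simpa using DegLt.zero) (fun n hn c => ?_)
    (fun y z hy hz => by rw [mul_add]; exact hy.add hz) hy
  rw [← mul_assoc]
  exact (hR.degLt_mul_pow n (hR.degLt_mul_C hx c)).mono (by omega)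

lemma substT_monomial (n : ℕ) (a : D) (u : R) :
    substT coeff i (i a * t ^ n) u = i a * u ^ n := by
  rw [substT, hR.coeff_monomial, Finsupp.sum_single_index (by simp)]

lemma substT_C (a : D) (u : R) : substT coeff i (i a) u = i a := by
  simpa using hR.substT_monomial 0 a u

lemma substT_t (u : R) : substT coeff i t u = u := by
  simpa using hR.substT_monomial 1 1 u

lemma substT_self (x : R) : substT coeff i x t = x := by
  induction x using hR.induction_on with
  | h0 => exact substT_zero t
  | hmonomial n a => exact hR.substT_monomial n a t
  | hadd x y hx hy => rw [substT_add, hx, hy]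

lemma substT_C_mul (a : D) (x u : R) :
    substT coeff i (i a * x) u = i a * substT coeff i x u := by
  induction x using hR.induction_on with
  | h0 => simp [substT_zero]
  | hmonomial n b =>
    rw [← mul_assoc, ← map_mul, hR.substT_monomial, hR.substT_monomial, map_mul, mul_assoc]
  | hadd x y hx hy => rw [mul_add, substT_add, hx, hy, substT_add, mul_add]

section CommutationRule

variable {u : R} (hu : ∀ a : D, u * i a = i a * u + i (δ a))
include hu

lemma substT_t_mul (x : R) : substT coeff i (t * x) u = u * substT coeff i x u := by
  induction x using hR.induction_on with
  | h0 => simp [substT_zero]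
  | hmonomial n a =>
    rw [← mul_assoc, hR.1, add_mul, mul_assoc, ← pow_succ', substT_add, hR.substT_monomial,
      hR.substT_monomial, hR.substT_monomial, ← mul_assoc, hu, add_mul, mul_assoc, ← pow_succ']
  | hadd x y hx hy => rw [mul_add, substT_add, hx, hy, substT_add, mul_add]

lemma substT_pow_mul (k : ℕ) (x : R) :
    substT coeff i (t ^ k * x) u = u ^ k * substT coeff i x u := by
  induction k with
  | zero => simp
  | succ k ih => rw [pow_succ', mul_assoc, hR.substT_t_mul hu, ih, pow_succ', mul_assoc]

lemma substT_mul (x y : R) :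
    substT coeff i (x * y) u = substT coeff i x u * substT coeff i y u := by
  induction x using hR.induction_on with
  | h0 => simp [substT_zero]
  | hmonomial n a =>
    rw [mul_assoc, hR.substT_C_mul, hR.substT_pow_mul hu, hR.substT_monomial, mul_assoc]
  | hadd x x' hx hx' => rw [add_mul, substT_add, hx, hx', substT_add, add_mul]

noncomputable def substHom : R →+* R where
  toFun x := substT coeff i x u
  map_one' := by simpa using hR.substT_C 1 u
  map_mul' := hR.substT_mul hu
  map_zero' := substT_zero u
  map_add' x y := substT_add x y u

end CommutationRule

lemma degLt_substT {u : R} (hu : DegLt coeff 2 u) (hx : DegLt coeff m x) :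
    DegLt coeff m (substT coeff i x u) := by
  have hpow : ∀ n : ℕ, DegLt coeff (n + 1) (u ^ n) := by
    intro n
    induction n with
    | zero => simpa using hR.degLt_C one_pos 1
    | succ n ih => rw [pow_succ]; exact hR.degLt_mul ih hu
  refine hR.degLt_induction (by simpa [substT_zero] using DegLt.zero) (fun n hn a => ?_)
    (fun x y hx hy => by rw [substT_add]; exact hx.add hy) hx
  rw [hR.substT_monomial]
  exact hR.degLt_C_mul a ((hpow n).mono hn)

section Monic

variable {f : R} (hf : MonicDeg coeff m f)
include hf

lemma coeff_mul_monic {k : ℕ} {z : R} (hz : DegLt coeff (k + 1) z) :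
    coeff (z * f) (k + m) = coeff z k := by
  have hpow : coeff (t ^ m) = Finsupp.single m 1 := by simpa using hR.coeff_monomial m 1
  have hg : DegLt coeff m (f - t ^ m) := by
    intro n hn
    rw [map_sub, Finsupp.sub_apply, hpow, Finsupp.single_apply]
    rcases hn.eq_or_lt with rfl | hlt
    · rw [if_pos rfl, hf.1, sub_self]
    · rw [if_neg hlt.ne, hf.2 n hlt, sub_zero]
  have hzg : coeff (z * (f - t ^ m)) (k + m) = 0 := by
    cases m with
    | zero => rw [hg.eq_zero_of_zero, mul_zero, map_zero, Finsupp.zero_apply]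
    | succ j => exact hR.degLt_mul hz hg (k + (j + 1)) (by omega)
  rw [← add_sub_cancel (t ^ m) f, mul_add, map_add coeff, Finsupp.add_apply,
    hR.coeff_mul_pow, hzg, add_zero]

lemma eq_zero_of_degLt_mul_monic {z : R} (h : DegLt coeff m (z * f)) : z = 0 := by
  by_contra hz
  have hsupp : (coeff z).support.Nonempty :=
    Finsupp.support_nonempty_iff.mpr fun hc => hz (coeff.injective (by rw [hc, map_zero]))
  set k := (coeff z).support.max' hsupp
  have hk : coeff z k ≠ 0 := Finsupp.mem_support_iff.mp ((coeff z).support.max'_mem hsupp)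
  have hzk : DegLt coeff (k + 1) z := fun n hn => by
    by_contra h'
    have := (coeff z).support.le_max' n (Finsupp.mem_support_iff.mpr h')
    omega
  exact hk (hR.coeff_mul_monic hf hzk ▸ h (k + m) (by omega))

lemma map_petitMul {mul : R → R → R} (hmul : IsPetitMul coeff f m mul) (Φ : R →+* R)
    (hΦf : Φ f = f) (hΦ : ∀ x, DegLt coeff m x → DegLt coeff m (Φ x)) (x y : R) :
    Φ (mul x y) = mul (Φ x) (Φ y) := by
  obtain ⟨hxy, q, hq⟩ := hmul x y
  obtain ⟨hΦxy, q', hq'⟩ := hmul (Φ x) (Φ y)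
  have hdiff : (q' - Φ q) * f = Φ (mul x y) - mul (Φ x) (Φ y) := by
    have := congrArg Φ hq
    rw [map_mul, map_add, map_mul, hΦf, hq'] at this
    rw [sub_mul, sub_eq_sub_iff_add_eq_add, this, add_comm]
  have hq0 : q' - Φ q = 0 :=
    hR.eq_zero_of_degLt_mul_monic hf (hdiff ▸ (hΦ _ hxy).sub hΦxy)
  rw [← sub_eq_zero, ← hdiff, hq0, zero_mul]

end Monic

lemma monicDeg_pow_sub_sub_C {p : ℕ} (hp : 2 ≤ p) (d : D) :
    MonicDeg coeff p (t ^ p - t - i d) := by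
  have hpow : coeff (t ^ p) = Finsupp.single p 1 := by simpa using hR.coeff_monomial p 1
  have ht : coeff t = Finsupp.single 1 1 := by simpa using hR.coeff_monomial 1 1
  refine ⟨?_, fun n hn => ?_⟩ <;>
    simp only [map_sub, Finsupp.sub_apply, hpow, ht, hR.coeff_C, Finsupp.single_apply]
  · simp [show 1 ≠ p by omega, show 0 ≠ p by omega]
  · simp [show p ≠ n by omega, show 1 ≠ n by omega, show 0 ≠ n by omega]

section Gmap

lemma sub_C_mul_C {a : D} (ha : ∀ b, Commute a b) (b : D) :
    (t - i a) * i b = i b * (t - i a) + i (δ b) := by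
  rw [sub_mul, hR.1, mul_sub, ← map_mul, ← map_mul, (ha b).eq]
  abel

lemma coe_substHom_sub_C {a : D} (ha : ∀ b, Commute a b) :
    ⇑(hR.substHom (hR.sub_C_mul_C ha)) = Gmap coeff i t a := rfl

lemma gmap_C (a b : D) : Gmap coeff i t a (i b) = i b := hR.substT_C b _

lemma gmap_t (a : D) : Gmap coeff i t a t = t - i a := hR.substT_t _

lemma gmap_zero (x : R) : Gmap coeff i t 0 x = x := by
  simp [Gmap, hR.substT_self]

lemma degLt_gmap (a : D) (hx : DegLt coeff m x) : DegLt coeff m (Gmap coeff i t a x) :=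
  hR.degLt_substT ((hR.degLt_t one_lt_two).sub (hR.degLt_C two_pos a)) hx

lemma gmap_gmap {a : D} (ha : ∀ b, Commute a b) (b : D) (x : R) :
    Gmap coeff i t a (Gmap coeff i t b x) = Gmap coeff i t (a + b) x := by
  rw [← hR.coe_substHom_sub_C ha]
  change _ = substT coeff i x (t - i (a + b))
  rw [Gmap, map_substT _ (hR.gmap_C a), map_sub, hR.coe_substHom_sub_C ha, hR.gmap_t,
    hR.gmap_C, map_add, sub_sub]

lemma iterate_gmap {a : D} (ha : ∀ b, Commute a b) (k : ℕ) :
    (Gmap coeff i t a)^[k] = Gmap coeff i t (k * a) := by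
  funext x
  induction k with
  | zero => simp [hR.gmap_zero]
  | succ k ih =>
    rw [Function.iterate_succ_apply', ih, hR.gmap_gmap ha, Nat.cast_succ, add_one_mul, add_comm]

lemma isAut_gmap {a : D} (ha : ∀ b, Commute a b) {f : R} {mul : R → R → R}
    (hf : MonicDeg coeff m f) (hmul : IsPetitMul coeff f m mul)
    (hfix : Gmap coeff i t a f = f) (F : Set D) :
    IsAut F i (SfSet coeff m) mul (Gmap coeff i t a) := by
  have hna : ∀ b, Commute (-a) b := fun b => (ha b).neg_left
  set Φ := hR.substHom (hR.sub_C_mul_C ha)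
  refine ⟨⟨fun x hx => hR.degLt_gmap a hx, fun x _ y _ h => ?_, fun y hy => ?_⟩,
    fun x _ y _ => map_add Φ x y, fun x _ y _ => ?_, map_one Φ, fun c _ x _ => ?_⟩
  · have := congrArg (Gmap coeff i t (-a)) h
    rwa [hR.gmap_gmap hna, hR.gmap_gmap hna, neg_add_cancel, hR.gmap_zero, hR.gmap_zero] at this
  · exact ⟨_, hR.degLt_gmap (-a) hy, by rw [hR.gmap_gmap ha, add_neg_cancel, hR.gmap_zero]⟩
  · exact hR.map_petitMul hf hmul Φ hfix (fun x => hR.degLt_gmap a) x y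
  · exact hR.substT_C_mul c x _

end Gmap

end IsDiffPolyRing

end DiffPolyRing

theorem stmt_7_general {D R : Type*} [DivisionRing D] [Ring R]
    (p : ℕ) (hp : p.Prime) [CharP D p]
    (δ : D → D)
    (i : D →+* R) (t : R) (coeff : R ≃+ (ℕ →₀ D))
    (hR : IsDiffPolyRing δ i t coeff)
    (d : D) (f : R) (hfdef : f = t ^ p - t - i d)
    (mulS : R → R → R) (hmulS : IsPetitMul coeff f p mulS) :
    -- G_{id,−1} fixes D pointwise and sends t to t − 1 ...
    (∀ a : D, Gmap coeff i t 1 (i a) = i a) ∧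
    Gmap coeff i t 1 t = t - 1 ∧
    -- ... is an automorphism of S_f ...
    IsAut (F0Set δ) i (SfSet coeff p) mulS (Gmap coeff i t 1) ∧
    -- ... of order exactly p
    (∀ x ∈ SfSet coeff p, (Gmap coeff i t 1)^[p] x = x) ∧
    ∀ k : ℕ, 0 < k → k < p → ∃ x ∈ SfSet coeff p, (Gmap coeff i t 1)^[k] x ≠ x := by
  have : Fact p.Prime := ⟨hp⟩
  have : CharP R p := charP_of_injective_ringHom hR.C_injective p
  have h1 : ∀ b : D, Commute 1 b := Commute.one_left
  have hfix : Gmap coeff i t 1 f = f := by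
    rw [← hR.coe_substHom_sub_C h1, hfdef, map_sub, map_sub, map_pow, hR.coe_substHom_sub_C h1,
      hR.gmap_t, hR.gmap_C, map_one, sub_pow_char_of_commute p (Commute.one_right t),
      one_pow]
    abel
  refine ⟨hR.gmap_C 1, by rw [hR.gmap_t, map_one],
    hR.isAut_gmap h1 (hfdef ▸ hR.monicDeg_pow_sub_sub_C hp.two_le d) hmulS hfix _,
    fun x _ => ?_, fun k hk hkp => ⟨t, hR.degLt_t hp.one_lt, ?_⟩⟩
  · rw [hR.iterate_gmap h1, CharP.cast_eq_zero, zero_mul, hR.gmap_zero]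
  · rw [hR.iterate_gmap h1, mul_one, hR.gmap_t, Ne, sub_eq_self,
      map_eq_zero_iff i hR.C_injective, CharP.cast_eq_zero_iff D p]
    exact fun hdvd => (Nat.le_of_dvd hk hdvd).not_gt hkp

/-- for `f(t) = t^p − t − d ∈ D[t;δ]` in characteristic `p`, the
map `G_{id,−1}` is an automorphism of `S_f` of order exactly `p`. -/
theorem stmt_7 {D R : Type*} [DivisionRing D] [Ring R]
    (p : ℕ) (hp : p.Prime) [CharP D p]
    (δ : D → D) (hδ : IsDeriv δ)
    (i : D →+* R) (t : R) (coeff : R ≃+ (ℕ →₀ D))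
    (hR : IsDiffPolyRing δ i t coeff)
    (d : D) (f : R) (hfdef : f = t ^ p - t - i d)
    (mulS : R → R → R) (hmulS : IsPetitMul coeff f p mulS) :
    -- G_{id,−1} fixes D pointwise and sends t to t − 1 ...
    (∀ a : D, Gmap coeff i t 1 (i a) = i a) ∧
    Gmap coeff i t 1 t = t - 1 ∧
    -- ... is an automorphism of S_f ...
    IsAut (F0Set δ) i (SfSet coeff p) mulS (Gmap coeff i t 1) ∧
    -- ... of order exactly p
    (∀ x ∈ SfSet coeff p, (Gmap coeff i t 1)^[p] x = x) ∧
    ∀ k : ℕ, 0 < k → k < p → ∃ x ∈ SfSet coeff p, (Gmap coeff i t 1)^[k] x ≠ x :=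
  stmt_7_general p hp δ i t coeff hR d f hfdef mulS hmulS
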